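/- arXiv:gr-qc/0512119 — 6 statements merged into one kernel-verified Lean document; each statement's English description precedes it below -/
import Mathlib

section
/- For all real numbers x and α with α > 0 and -α < x ≤ 0, the inequality ((α - x) α⁵) / (2(α² + x²)³) ≤ 2^(-1/2) holds, and hence ((α - x)(x + α)³ α²) / (2(α² + x²)³) < 1. -/
/-!
For the first bound write `s = √(α² + x²)`: then `|α - x| ≤ √2 s` and `|α| ≤ s`, so
`(α - x) α⁵ ≤ √2 s⁶ = 2^(-1/2) · 2 (α² + x²)³`.
For the second, `(α - x)(x + α)³ α² = ((α - x)(α + x)) · ((x + α) α)²`, and for `x ≤ 0 < x + α`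
both `(α - x)(α + x) = α² - x²` and `(x + α) α = α² + x α` lie in `[0, α² + x²]`.
-/

lemma abs_sub_le_sqrt_two_mul_sqrt_sq_add_sq (a b : ℝ) : |a - b| ≤ √2 * √(a ^ 2 + b ^ 2) := by
  rw [← Real.sqrt_mul zero_le_two]
  exact Real.abs_le_sqrt (by nlinarith [sq_nonneg (a + b)])

lemma sub_mul_pow_five_le_sqrt_two_mul (a b : ℝ) :
    (a - b) * a ^ 5 ≤ √2 * (a ^ 2 + b ^ 2) ^ 3 := by
  set s := √(a ^ 2 + b ^ 2) with hs
  have ha : |a| ≤ s := Real.abs_le_sqrt (le_add_of_nonneg_right (sq_nonneg b))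
  calc (a - b) * a ^ 5 ≤ |a - b| * |a| ^ 5 := by
        rw [← abs_pow, ← abs_mul]; exact le_abs_self _
    _ ≤ (√2 * s) * s ^ 5 := by
        gcongr; exact abs_sub_le_sqrt_two_mul_sqrt_sq_add_sq a b
    _ = √2 * (s ^ 2) ^ 3 := by ring
    _ = √2 * (a ^ 2 + b ^ 2) ^ 3 := by rw [hs, Real.sq_sqrt (by positivity)]

lemma two_rpow_neg_half_mul_two : (2 : ℝ) ^ (-(1 / 2 : ℝ)) * 2 = √2 := by
  rw [Real.rpow_neg zero_le_two, ← Real.sqrt_eq_rpow, inv_mul_eq_div, Real.div_sqrt]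

lemma sub_mul_add_pow_three_mul_sq_le {x α : ℝ} (hx : x ≤ 0) (hxα : 0 ≤ x + α) :
    (α - x) * (x + α) ^ 3 * α ^ 2 ≤ (α ^ 2 + x ^ 2) ^ 3 := by
  have hα : 0 ≤ α := by linarith
  have h_diff : (α - x) * (x + α) ≤ α ^ 2 + x ^ 2 := by nlinarith [sq_nonneg x]
  have h_mixed : (x + α) * α ≤ α ^ 2 + x ^ 2 := by nlinarith
  calc (α - x) * (x + α) ^ 3 * α ^ 2 = ((α - x) * (x + α)) * ((x + α) * α) ^ 2 := by ring
    _ ≤ (α ^ 2 + x ^ 2) * (α ^ 2 + x ^ 2) ^ 2 := by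
        gcongr
    _ = (α ^ 2 + x ^ 2) ^ 3 := by ring

theorem X_multiplier_ineq_neg_general (x α : ℝ) (hx1 : -α < x) (hx2 : x ≤ 0) :
    ((α - x) * α ^ 5) / (2 * (α ^ 2 + x ^ 2) ^ 3) ≤ (2 : ℝ) ^ (-(1 / 2 : ℝ)) ∧
    ((α - x) * (x + α) ^ 3 * α ^ 2) / (2 * (α ^ 2 + x ^ 2) ^ 3) < 1 := by
  have hα : 0 < α := by linarith
  have hden : 0 < 2 * (α ^ 2 + x ^ 2) ^ 3 := by positivity
  constructor
  · rw [div_le_iff₀ hden, ← mul_assoc, two_rpow_neg_half_mul_two]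
    exact sub_mul_pow_five_le_sqrt_two_mul α x
  · rw [div_lt_one hden]
    calc (α - x) * (x + α) ^ 3 * α ^ 2 ≤ (α ^ 2 + x ^ 2) ^ 3 :=
          sub_mul_add_pow_three_mul_sq_le hx2 (by linarith)
      _ < 2 * (α ^ 2 + x ^ 2) ^ 3 := by linarith

/-- Case `-α < x ≤ 0` of the key algebraic inequality in the `X`-multiplier
construction. -/
theorem X_multiplier_ineq_neg (x α : ℝ) (hα : 0 < α) (hx1 : -α < x) (hx2 : x ≤ 0) :
    ((α - x) * α ^ 5) / (2 * (α ^ 2 + x ^ 2) ^ 3) ≤ (2 : ℝ) ^ (-(1 / 2 : ℝ)) ∧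
    ((α - x) * (x + α) ^ 3 * α ^ 2) / (2 * (α ^ 2 + x ^ 2) ^ 3) < 1 :=
  X_multiplier_ineq_neg_general x α hx1 hx2
end

section
/- Let r : ℝ → (2, ∞) be a C¹ increasing bijection satisfying dr/dr* = 1 - 2/r (the Regge–Wheeler relation with M = 1). Define f(r*) = ∫_{-∞}^{r*} (r(ρ)/(1+|ρ|))² dρ. Then f is well-defined (the integral converges), f(r*) ~ C/|r*| as r* → -∞, f(r*) ~ r* as r* → +∞, and there is a constant C such that ((1+|r*|) f(r*))² / r(r*)² ≤ C r(r*)² for all r*. -/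
open MeasureTheory Set Filter

section HardyAux

variable {r : ℝ → ℝ}

lemma hw_two_lt (hrange : Set.range r = Set.Ioi (2:ℝ)) (s : ℝ) : 2 < r s := by
  have : r s ∈ Set.range r := ⟨s, rfl⟩
  rw [hrange] at this; exact this

lemma hw_cont (hdr : ∀ s, HasDerivAt r (1 - 2 / r s) s) : Continuous r := by
  have hdiff : Differentiable ℝ r := fun x => (hdr x).differentiableAt
  exact hdiff.continuous

lemma hw_lip (hrange : Set.range r = Set.Ioi (2:ℝ))
    (hdr : ∀ s, HasDerivAt r (1 - 2 / r s) s) {a b : ℝ} (hab : a ≤ b) :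
    r b ≤ r a + (b - a) := by
  have hanti : StrictAnti (fun s => r s - s) := by
    apply strictAnti_of_hasDerivAt_neg (f' := fun s => (1 - 2 / r s) - 1)
    · intro x; exact (hdr x).sub (hasDerivAt_id x)
    · intro x
      have h2 := hw_two_lt hrange x
      have : 0 < 2 / r x := by positivity
      linarith
  rcases eq_or_lt_of_le hab with rfl | h
  · linarith
  · have := hanti h
    simp only at this
    linarith

lemma hw_lower (hrange : Set.range r = Set.Ioi (2:ℝ)) (hmono : StrictMono r)
    (hdr : ∀ s, HasDerivAt r (1 - 2 / r s) s) {a b : ℝ} (hab : a ≤ b) :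
    r a + (1 - 2 / r a) * (b - a) ≤ r b := by
  have h2a := hw_two_lt hrange a
  have hd : ∀ x : ℝ, HasDerivAt (fun s => r s - (1 - 2 / r a) * s)
      ((1 - 2 / r x) - (1 - 2 / r a) * 1) x := by
    intro x
    exact (hdr x).sub ((hasDerivAt_id x).const_mul _)
  have hmonoOn : MonotoneOn (fun s => r s - (1 - 2 / r a) * s) (Set.Ici a) := by
    apply monotoneOn_of_deriv_nonneg (convex_Ici a)
    · exact (Continuous.continuousOn (by have := hw_cont hdr; fun_prop))
    · intro x _
      exact (hd x).differentiableAt.differentiableWithinAt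
    · intro x hx
      rw [interior_Ici] at hx
      rw [(hd x).deriv]
      have hra : 2 < r a := h2a
      have hrx : r a ≤ r x := (hmono.monotone (le_of_lt hx))
      have h1 : 2 / r x ≤ 2 / r a :=
        div_le_div_of_nonneg_left (by norm_num) (by linarith) hrx
      linarith
  have := hmonoOn (Set.self_mem_Ici (a := a)) (by exact hab : b ∈ Set.Ici a) hab
  simp only at this
  nlinarith

lemma hw_tendsto_bot (hrange : Set.range r = Set.Ioi (2:ℝ)) (hmono : StrictMono r) :
    Filter.Tendsto r Filter.atBot (nhds 2) := by
  rw [Metric.tendsto_nhds]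
  intro ε hε
  rw [Filter.eventually_atBot]
  have : (2 + ε/2) ∈ Set.range r := by rw [hrange]; simp; linarith
  obtain ⟨N, hN⟩ := this
  refine ⟨N, fun n hn => ?_⟩
  have h1 : r n ≤ 2 + ε/2 := hN ▸ hmono.monotone hn
  have h2 : 2 < r n := hw_two_lt hrange n
  rw [Real.dist_eq, abs_of_pos (by linarith)]
  linarith

lemma hw_tendsto_top (hrange : Set.range r = Set.Ioi (2:ℝ)) (hmono : StrictMono r) :
    Filter.Tendsto r Filter.atTop Filter.atTop := by
  apply tendsto_atTop_atTop_of_monotone hmono.monotone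
  intro b
  have : max b 3 ∈ Set.range r := by rw [hrange]; exact Set.mem_Ioi.2 (lt_max_of_lt_right (by norm_num))
  obtain ⟨a, ha⟩ := this
  exact ⟨a, ha ▸ le_max_left b 3⟩

end HardyAux

section HardyAux2

variable {r : ℝ → ℝ}

lemma hw_base_int {s : ℝ} (hs : s ≤ 0) :
    MeasureTheory.IntegrableOn (fun ρ : ℝ => (1/(1-ρ))^2) (Set.Iic s) := by
  apply MeasureTheory.Integrable.mono' (g := fun ρ : ℝ => (1 + ρ^2)⁻¹)
    (integrable_inv_one_add_sq.restrict)
  · apply Measurable.aestronglyMeasurable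
    exact (measurable_const.div (measurable_const.sub measurable_id)).pow_const 2
  · rw [MeasureTheory.ae_restrict_iff' measurableSet_Iic]
    apply Filter.Eventually.of_forall
    intro x hx
    have hx0 : x ≤ 0 := le_trans hx hs
    have h1 : (0:ℝ) < 1 - x := by linarith
    have h2 : (1:ℝ) + x^2 ≤ (1-x)^2 := by nlinarith
    rw [Real.norm_eq_abs, abs_of_nonneg (by positivity), one_div, inv_pow]
    exact inv_anti₀ (by positivity) h2

end HardyAux2

section HardyAux3

open MeasureTheory

variable {r : ℝ → ℝ}

lemma hw_int (hrange : Set.range r = Set.Ioi (2:ℝ)) (hmono : StrictMono r)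
    (hdr : ∀ s, HasDerivAt r (1 - 2 / r s) s) (s : ℝ) :
    MeasureTheory.IntegrableOn (fun ρ => (r ρ / (1 + |ρ|)) ^ 2) (Set.Iic s) := by
  apply MeasureTheory.Integrable.mono' (g := fun ρ : ℝ => (r s)^2 * (1+ρ^2)⁻¹)
    ((integrable_inv_one_add_sq.const_mul _).restrict)
  · apply Continuous.aestronglyMeasurable
    apply Continuous.pow
    apply Continuous.div (hw_cont hdr) (by fun_prop)
    intro x
    have := abs_nonneg x; intro h; linarith
  · rw [MeasureTheory.ae_restrict_iff' measurableSet_Iic]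
    apply Filter.Eventually.of_forall
    intro x hx
    have h2x : (2:ℝ) < r x := hw_two_lt hrange x
    have hxs : r x ≤ r s := hmono.monotone hx
    have ha : (0:ℝ) ≤ |x| := abs_nonneg x
    have hd : (1:ℝ) + x^2 ≤ (1+|x|)^2 := by
      have := sq_abs x
      nlinarith
    rw [Real.norm_eq_abs, abs_of_nonneg (by positivity), div_pow, ← div_eq_mul_inv]
    apply div_le_div₀ (by positivity) (by nlinarith) (by positivity) hd

lemma hw_int_eq {s : ℝ} (hs : s ≤ 0) :
    ∫ ρ in Set.Iic s, (1/(1-ρ))^2 = 1/(1-s) := by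
  have hderiv : ∀ x ∈ Set.Iic s, HasDerivAt (fun ρ : ℝ => (1-ρ)⁻¹) ((1/(1-x))^2) x := by
    intro x hx
    have hxs : x ≤ s := hx
    have h1 : (0:ℝ) < 1 - x := by linarith
    have hd : HasDerivAt (fun ρ : ℝ => 1 - ρ) (-1) x := by
      simpa using (hasDerivAt_id x).const_sub 1
    have := hd.inv (ne_of_gt h1)
    convert this using 1
    · rfl
    · rfl
    · rfl
    · rw [neg_neg, one_div, inv_pow, one_div]
  have htend : Filter.Tendsto (fun ρ : ℝ => (1-ρ)⁻¹) Filter.atBot (nhds 0) := by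
    apply tendsto_inv_atTop_zero.comp
    have : Filter.Tendsto (fun ρ : ℝ => -ρ) Filter.atBot Filter.atTop :=
      tendsto_neg_atBot_atTop
    have h2 := Filter.tendsto_atTop_add_const_left Filter.atBot 1 this
    exact h2.congr (fun ρ => by beta_reduce; ring)
  have h := MeasureTheory.integral_Iic_of_hasDerivAt_of_tendsto' hderiv (hw_base_int hs) htend
  rw [h]
  rw [one_div]
  ring

lemma hw_lb (hrange : Set.range r = Set.Ioi (2:ℝ)) (hmono : StrictMono r)
    (hdr : ∀ s, HasDerivAt r (1 - 2 / r s) s) {s : ℝ} (hs : s ≤ 0) :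
    4 * (1/(1-s)) ≤ ∫ ρ in Set.Iic s, (r ρ / (1 + |ρ|)) ^ 2 := by
  have h1 : 4 * (1/(1-s)) = ∫ ρ in Set.Iic s, 4 * (1/(1-ρ))^2 := by
    rw [MeasureTheory.integral_const_mul, hw_int_eq hs]
  rw [h1]
  apply MeasureTheory.setIntegral_mono_on ((hw_base_int hs).const_mul 4)
    (hw_int hrange hmono hdr s) measurableSet_Iic
  intro x hx
  have hxs : x ≤ s := hx
  have hx0 : x ≤ 0 := le_trans hxs hs
  have h2x : (2:ℝ) < r x := hw_two_lt hrange x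
  have h1x : (0:ℝ) < 1 - x := by linarith
  rw [abs_of_nonpos hx0]
  have e : (1:ℝ) + -x = 1 - x := by ring
  rw [e, div_pow, div_pow, one_pow, mul_one_div]
  gcongr
  nlinarith

lemma hw_ub (hrange : Set.range r = Set.Ioi (2:ℝ)) (hmono : StrictMono r)
    (hdr : ∀ s, HasDerivAt r (1 - 2 / r s) s) {s : ℝ} (hs : s ≤ 0) :
    (∫ ρ in Set.Iic s, (r ρ / (1 + |ρ|)) ^ 2) ≤ (r s)^2 * (1/(1-s)) := by
  have h1 : (r s)^2 * (1/(1-s)) = ∫ ρ in Set.Iic s, (r s)^2 * (1/(1-ρ))^2 := by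
    rw [MeasureTheory.integral_const_mul, hw_int_eq hs]
  rw [h1]
  apply MeasureTheory.setIntegral_mono_on (hw_int hrange hmono hdr s)
    ((hw_base_int hs).const_mul _) measurableSet_Iic
  intro x hx
  have hxs : x ≤ s := hx
  have hx0 : x ≤ 0 := le_trans hxs hs
  have h2x : (2:ℝ) < r x := hw_two_lt hrange x
  have hrxs : r x ≤ r s := hmono.monotone hxs
  have h1x : (0:ℝ) < 1 - x := by linarith
  rw [abs_of_nonpos hx0]
  have e : (1:ℝ) + -x = 1 - x := by ring
  rw [e, div_pow, div_pow, one_pow, mul_one_div]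
  gcongr

end HardyAux3

section HardyAux4

open MeasureTheory

variable {r : ℝ → ℝ}

lemma hw_rtop (hrange : Set.range r = Set.Ioi (2:ℝ)) (hmono : StrictMono r)
    (hdr : ∀ s, HasDerivAt r (1 - 2 / r s) s) :
    Filter.Tendsto (fun s => r s / (1 + s)) Filter.atTop (nhds 1) := by
  rw [Metric.tendsto_atTop]
  intro ε hε
  -- choose S ≥ 0 with r S > 4/ε
  obtain ⟨S₀, hS₀⟩ := (Filter.tendsto_atTop.1 (hw_tendsto_top hrange hmono) (4/ε + 1)).exists
  set S := max S₀ 0 with hSdef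
  have hS0 : 0 ≤ S := le_max_right _ _
  have hrS : 4/ε < r S := by
    have := hmono.monotone (le_max_left S₀ 0)
    linarith
  have hrSpos : 0 < r S := lt_trans (by norm_num) (hw_two_lt hrange S)
  have hslope : 1 - ε/2 ≤ 1 - 2 / r S := by
    have h4 : 2 / r S ≤ ε/2 := by
      rw [div_le_iff₀ hrSpos]
      rw [div_lt_iff₀ hε] at hrS
      linarith
    linarith
  obtain ⟨B, hBnn, hB1, hB2⟩ : ∃ B : ℝ, 0 ≤ B ∧ r S - S - 1 ≤ B ∧ 1 + (1 - ε/2) * S - r S ≤ B := by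
    refine ⟨|r S - S - 1| + |1 + (1 - ε/2) * S - r S|, by positivity, ?_, ?_⟩
    · have := abs_nonneg (1 + (1 - ε/2) * S - r S); have := le_abs_self (r S - S - 1)
      linarith
    · have := abs_nonneg (r S - S - 1); have := le_abs_self (1 + (1 - ε/2) * S - r S)
      linarith
  refine ⟨max S (2 * B / ε), fun s hs => ?_⟩
  have hsS : S ≤ s := le_trans (le_max_left _ _) hs
  have hsB : 2 * B / ε ≤ s := le_trans (le_max_right _ _) hs
  have hs0 : 0 ≤ s := le_trans hS0 hsS
  have hs1 : (0:ℝ) < 1 + s := by linarith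
  have hup : r s ≤ r S + (s - S) := hw_lip hrange hdr hsS
  have hlo : r S + (1 - ε/2) * (s - S) ≤ r s := by
    have := hw_lower hrange hmono hdr hsS
    nlinarith [sub_nonneg.2 hsS]
  have key : |r s - (1 + s)| ≤ ε/2 * (1 + s) + B := by
    rw [abs_le]
    constructor
    · -- -(ε/2 (1+s) + B) ≤ r s - (1+s)
      have h1 : (1 + s) - r s ≤ 1 + s - r S - (1 - ε/2) * (s - S) := by linarith
      have h2 : 1 + s - r S - (1 - ε/2) * (s - S) = ε/2 * s + (1 + (1 - ε/2) * S - r S) := by ring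
      have h5 : ε/2 * s + ε/2 = ε/2 * (1+s) := by ring
      linarith
    · have h1 : r s - (1 + s) ≤ r S - S - 1 := by linarith
      have h4 : 0 ≤ ε/2 * (1+s) := by positivity
      linarith
  have hdist : dist (r s / (1 + s)) 1 = |r s - (1 + s)| / (1 + s) := by
    have he : r s / (1 + s) - 1 = (r s - (1 + s)) / (1 + s) := by field_simp
    rw [Real.dist_eq, he, abs_div, abs_of_pos hs1]
  rw [hdist]
  rw [div_lt_iff₀ hs1]
  have hB2 : B < ε/2 * (1+s) := by
    rcases eq_or_lt_of_le hBnn with h | h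
    · rw [← h]; positivity
    · have : 2 * B / ε ≤ s := hsB
      rw [div_le_iff₀ hε] at this
      nlinarith
  calc |r s - (1 + s)| ≤ ε/2 * (1 + s) + B := key
    _ < ε/2 * (1+s) + ε/2 * (1+s) := by linarith
    _ = ε * (1+s) := by ring

end HardyAux4

section HardyAux5

open MeasureTheory

lemma hw_avg {g : ℝ → ℝ} (hint : ∀ s : ℝ, MeasureTheory.IntegrableOn g (Set.Iic s))
    (hlim : Filter.Tendsto g Filter.atTop (nhds 1)) :
    Filter.Tendsto (fun s => (∫ ρ in Set.Iic s, g ρ) / s) Filter.atTop (nhds 1) := by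
  rw [Metric.tendsto_atTop]
  intro ε hε
  obtain ⟨S, hS⟩ := Metric.tendsto_atTop.1 hlim (ε/4) (by positivity)
  set A := ∫ ρ in Set.Iic S, g ρ with hA
  refine ⟨max (max S 1) ((|A - S| + ε/4 * |S| + 1) * (4/ε)), fun s hs => ?_⟩
  have hsS : S ≤ s := le_trans (le_trans (le_max_left _ _) (le_max_left _ _)) hs
  have hs1 : (1:ℝ) ≤ s := le_trans (le_trans (le_max_right _ _) (le_max_left _ _)) hs
  have hsM : (|A - S| + ε/4 * |S| + 1) * (4/ε) ≤ s := le_trans (le_max_right _ _) hs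
  have hs0 : 0 < s := lt_of_lt_of_le one_pos hs1
  -- split the integral
  have hsplit : (∫ ρ in Set.Iic s, g ρ) = A + ∫ ρ in Set.Ioc S s, g ρ := by
    rw [hA, ← MeasureTheory.setIntegral_union (Set.Iic_disjoint_Ioc le_rfl)
      measurableSet_Ioc ((hint S)) ((hint s).mono_set Set.Ioc_subset_Iic_self),
      Set.Iic_union_Ioc_eq_Iic hsS]
  have hIoc_int : MeasureTheory.IntegrableOn g (Set.Ioc S s) :=
    (hint s).mono_set Set.Ioc_subset_Iic_self
  have hconst_int : MeasureTheory.IntegrableOn (fun _ : ℝ => (1:ℝ)) (Set.Ioc S s) :=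
    MeasureTheory.integrableOn_const measure_Ioc_lt_top.ne
  have hvol : (MeasureTheory.volume (Set.Ioc S s)).toReal = s - S := by
    rw [Real.volume_Ioc, ENNReal.toReal_ofReal (by linarith)]
  have hDbound : |∫ ρ in Set.Ioc S s, (g ρ - 1)| ≤ ε/4 * (s - S) := by
    have := MeasureTheory.norm_setIntegral_le_of_norm_le_const (μ := MeasureTheory.volume)
      (f := fun ρ => g ρ - 1) (C := ε/4) (s := Set.Ioc S s) measure_Ioc_lt_top ?_
    · rwa [Real.norm_eq_abs, MeasureTheory.measureReal_def, hvol] at this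
    · intro x hx
      have := hS x (le_of_lt hx.1)
      rw [Real.dist_eq] at this
      rw [Real.norm_eq_abs]
      linarith [le_of_lt this]
  have hIocval : (∫ ρ in Set.Ioc S s, g ρ) = (∫ ρ in Set.Ioc S s, (g ρ - 1)) + (s - S) := by
    have := MeasureTheory.integral_sub hIoc_int hconst_int
    simp only [MeasureTheory.setIntegral_const, smul_eq_mul, mul_one] at this ⊢
    rw [this, MeasureTheory.measureReal_def, hvol]
    ring
  -- assemble
  have hkey : (∫ ρ in Set.Iic s, g ρ) / s - 1
      = ((A - S) + ∫ ρ in Set.Ioc S s, (g ρ - 1)) / s := by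
    rw [hsplit, hIocval]
    field_simp
    ring
  rw [Real.dist_eq, hkey, abs_div, abs_of_pos hs0, div_lt_iff₀ hs0]
  have h1 : |(A - S) + ∫ ρ in Set.Ioc S s, (g ρ - 1)| ≤ |A - S| + ε/4 * (s - S) :=
    le_trans (abs_add_le _ _) (by linarith)
  have h2 : ε/4 * (s - S) ≤ ε/4 * s + ε/4 * |S| := by
    have : -S ≤ |S| := neg_le_abs S
    nlinarith
  have h3 : |A - S| + ε/4 * |S| < ε/4 * s := by
    have he : ε/4 * ((|A - S| + ε/4 * |S| + 1) * (4/ε)) = |A - S| + ε/4 * |S| + 1 := by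
      field_simp
    have := mul_le_mul_of_nonneg_left hsM (by positivity : (0:ℝ) ≤ ε/4)
    linarith
  calc |(A - S) + ∫ ρ in Set.Ioc S s, (g ρ - 1)|
      ≤ |A - S| + ε/4 * (s - S) := h1
    _ ≤ |A - S| + ε/4 * |S| + ε/4 * s := by linarith
    _ < ε/4 * s + ε/4 * s := by linarith
    _ ≤ ε * s := by nlinarith

end HardyAux5


/-- Properties of the auxiliary weight function
`f(r*) = ∫_{-∞}^{r*} (r(ρ)/(1+|ρ|))² dρ` in the Hardy inequality on the
Schwarzschild exterior: the integral converges, `f(r*) ~ C/|r*|` as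
`r* → -∞`, `f(r*) ~ r*` as `r* → +∞`, and `((1+|r*|) f)²/r² ≤ C r²`. -/

theorem hardy_weight_properties (r : ℝ → ℝ)
    (hrange : Set.range r = Set.Ioi (2 : ℝ))
    (hmono : StrictMono r)
    (hdr : ∀ s, HasDerivAt r (1 - 2 / r s) s) :
    (∀ s : ℝ, MeasureTheory.IntegrableOn
        (fun ρ => (r ρ / (1 + |ρ|)) ^ 2) (Set.Iic s)) ∧
    (∃ C > (0 : ℝ), Filter.Tendsto
        (fun s => (∫ ρ in Set.Iic s, (r ρ / (1 + |ρ|)) ^ 2) * |s|)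
        Filter.atBot (nhds C)) ∧
    Filter.Tendsto
        (fun s => (∫ ρ in Set.Iic s, (r ρ / (1 + |ρ|)) ^ 2) / s)
        Filter.atTop (nhds 1) ∧
    (∃ C : ℝ, ∀ s : ℝ,
      ((1 + |s|) * ∫ ρ in Set.Iic s, (r ρ / (1 + |ρ|)) ^ 2) ^ 2 / (r s) ^ 2
        ≤ C * (r s) ^ 2) := by
  have hint := fun s => hw_int hrange hmono hdr s
  have hinv0 : Filter.Tendsto (fun s : ℝ => (1-s)⁻¹) Filter.atBot (nhds 0) := by
    apply tendsto_inv_atTop_zero.comp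
    have h1 : Filter.Tendsto (fun ρ : ℝ => -ρ) Filter.atBot Filter.atTop :=
      tendsto_neg_atBot_atTop
    have h2 := Filter.tendsto_atTop_add_const_left Filter.atBot 1 h1
    exact h2.congr (fun ρ => by beta_reduce; ring)
  have haux : Filter.Tendsto (fun s : ℝ => (1/(1-s)) * |s|) Filter.atBot (nhds 1) := by
    have h2 : Filter.Tendsto (fun s : ℝ => 1 - (1-s)⁻¹) Filter.atBot (nhds 1) := by
      have := (tendsto_const_nhds (x := (1:ℝ)) (f := Filter.atBot)).sub hinv0
      simpa using this
    apply h2.congr'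
    filter_upwards [Filter.eventually_le_atBot (-1:ℝ)] with s hs
    have h1 : (0:ℝ) < 1 - s := by linarith
    rw [abs_of_nonpos (by linarith)]
    field_simp
    ring
  refine ⟨hint, ⟨4, by norm_num, ?_⟩, ?_, ?_⟩
  · -- atBot limit
    have hlow : Filter.Tendsto (fun s : ℝ => (4 * (1/(1-s))) * |s|) Filter.atBot (nhds 4) := by
      have := haux.const_mul (4:ℝ)
      norm_num at this
      apply this.congr
      intro s; ring
    have hhigh : Filter.Tendsto (fun s : ℝ => ((r s)^2 * (1/(1-s))) * |s|)
        Filter.atBot (nhds 4) := by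
      have h1 : Filter.Tendsto (fun s => (r s)^2) Filter.atBot (nhds 4) := by
        have := (hw_tendsto_bot hrange hmono).pow 2
        norm_num at this; exact this
      have := h1.mul haux
      norm_num at this
      apply this.congr
      intro s; ring
    apply tendsto_of_tendsto_of_tendsto_of_le_of_le' hlow hhigh
    · filter_upwards [Filter.eventually_le_atBot (0:ℝ)] with s hs
      exact mul_le_mul_of_nonneg_right (hw_lb hrange hmono hdr hs) (abs_nonneg s)
    · filter_upwards [Filter.eventually_le_atBot (0:ℝ)] with s hs
      exact mul_le_mul_of_nonneg_right (hw_ub hrange hmono hdr hs) (abs_nonneg s)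
  · -- atTop limit
    apply hw_avg hint
    have h2 : Filter.Tendsto (fun ρ => (r ρ/(1+ρ))^2) Filter.atTop (nhds 1) := by
      have := (hw_rtop hrange hmono hdr).pow 2
      norm_num at this; exact this
    apply h2.congr'
    filter_upwards [Filter.eventually_ge_atTop (0:ℝ)] with ρ hρ
    rw [abs_of_nonneg hρ]
  · -- global bound
    have h20 : (2:ℝ) < r 0 := hw_two_lt hrange 0
    have hc0 : 0 < 1 - 2 / r 0 := by
      have : 2 / r 0 < 1 := by rw [div_lt_one (by linarith)]; linarith
      linarith
    set c₀ := 1 - 2 / r 0 with hc0def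
    have hc01 : c₀ ≤ 1 := by
      have : 0 < 2 / r 0 := by positivity
      rw [hc0def]; linarith
    set K := max 1 ((r 0)^2/c₀^2) with hK
    have hK1 : (1:ℝ) ≤ K := le_max_left _ _
    have hfnn : ∀ s : ℝ, 0 ≤ ∫ ρ in Set.Iic s, (r ρ / (1 + |ρ|)) ^ 2 := fun s =>
      MeasureTheory.setIntegral_nonneg measurableSet_Iic (fun x _ => by positivity)
    have hbound : ∀ s : ℝ, (1 + |s|) * (∫ ρ in Set.Iic s, (r ρ / (1 + |ρ|)) ^ 2)
        ≤ K * (r s)^2 := by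
      intro s
      rcases le_or_gt s 0 with hs | hs
      · rw [abs_of_nonpos hs]
        have hub := hw_ub hrange hmono hdr hs
        have h1s : (0:ℝ) < 1 - s := by linarith
        have h2 : (1 + -s) * (∫ ρ in Set.Iic s, (r ρ / (1 + |ρ|)) ^ 2)
            ≤ (1 + -s) * ((r s)^2 * (1/(1-s))) :=
          mul_le_mul_of_nonneg_left hub (by linarith)
        have h3 : (1 + -s) * ((r s)^2 * (1/(1-s))) = (r s)^2 := by
          field_simp
          ring
        have h4 : (r s)^2 ≤ K * (r s)^2 := by nlinarith [sq_nonneg (r s)]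
        linarith
      · rw [abs_of_pos hs]
        -- f s ≤ r 0 ^2 * (1 + s)
        have hf0 : (∫ ρ in Set.Iic (0:ℝ), (r ρ / (1 + |ρ|)) ^ 2) ≤ (r 0)^2 := by
          have := hw_ub hrange hmono hdr (le_refl (0:ℝ))
          norm_num at this
          exact this
        have hsplit : (∫ ρ in Set.Iic s, (r ρ / (1 + |ρ|)) ^ 2)
            = (∫ ρ in Set.Iic (0:ℝ), (r ρ / (1 + |ρ|)) ^ 2)
              + ∫ ρ in Set.Ioc (0:ℝ) s, (r ρ / (1 + |ρ|)) ^ 2 := by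
          rw [← MeasureTheory.setIntegral_union (Set.Iic_disjoint_Ioc le_rfl)
            measurableSet_Ioc (hint 0) ((hint s).mono_set Set.Ioc_subset_Iic_self),
            Set.Iic_union_Ioc_eq_Iic hs.le]
        have hIoc : (∫ ρ in Set.Ioc (0:ℝ) s, (r ρ / (1 + |ρ|)) ^ 2) ≤ (r 0)^2 * s := by
          have hconst : (∫ _ρ in Set.Ioc (0:ℝ) s, (r 0)^2) = (r 0)^2 * s := by
            rw [MeasureTheory.setIntegral_const, smul_eq_mul, MeasureTheory.measureReal_def, Real.volume_Ioc,
              ENNReal.toReal_ofReal (by linarith), mul_comm]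
            norm_num
          rw [← hconst]
          apply MeasureTheory.setIntegral_mono_on
            ((hint s).mono_set Set.Ioc_subset_Iic_self)
            (MeasureTheory.integrableOn_const measure_Ioc_lt_top.ne)
            measurableSet_Ioc
          intro x hx
          have hx0 : 0 < x := hx.1
          have h2x : (2:ℝ) < r x := hw_two_lt hrange x
          have hlip := hw_lip hrange hdr hx0.le
          have h1x : (0:ℝ) < 1 + |x| := by positivity
          rw [div_pow]
          rw [div_le_iff₀ (by positivity)]
          have : r x ≤ r 0 * (1 + |x|) := by
            rw [abs_of_pos hx0]
            nlinarith
          nlinarith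
        have hfs : (∫ ρ in Set.Iic s, (r ρ / (1 + |ρ|)) ^ 2) ≤ (r 0)^2 * (1 + s) := by
          rw [hsplit]; nlinarith [sq_nonneg (r 0)]
        have hrs : c₀ * (1 + s) ≤ r s := by
          have := hw_lower hrange hmono hdr (le_of_lt hs : (0:ℝ) ≤ s)
          rw [← hc0def] at this
          nlinarith
        have h1s : (0:ℝ) < 1 + s := by linarith
        have hK2 : (r 0)^2/c₀^2 ≤ K := le_max_right _ _
        have step : (1 + s) * (∫ ρ in Set.Iic s, (r ρ / (1 + |ρ|)) ^ 2)
            ≤ (r 0)^2 * (1 + s)^2 :=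
          by nlinarith [hfnn s]
        have step2 : (1 + s)^2 ≤ (r s)^2 / c₀^2 := by
          rw [le_div_iff₀ (by positivity)]
          have h := pow_le_pow_left₀ (le_of_lt (mul_pos hc0 h1s)) hrs 2
          nlinarith [h]
        calc (1 + s) * (∫ ρ in Set.Iic s, (r ρ / (1 + |ρ|)) ^ 2)
            ≤ (r 0)^2 * (1 + s)^2 := step
          _ ≤ (r 0)^2 * ((r s)^2 / c₀^2) := mul_le_mul_of_nonneg_left step2 (sq_nonneg (r 0))
          _ = ((r 0)^2 / c₀^2) * (r s)^2 := by ring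
          _ ≤ K * (r s)^2 := mul_le_mul_of_nonneg_right hK2 (sq_nonneg (r s))
    refine ⟨K^2, fun s => ?_⟩
    have hrpos : (0:ℝ) < (r s)^2 := by
      have := hw_two_lt hrange s; positivity
    rw [div_le_iff₀ hrpos]
    have h1 := hbound s
    have h2 : 0 ≤ (1 + |s|) * (∫ ρ in Set.Iic s, (r ρ / (1 + |ρ|)) ^ 2) := by
      have := hfnn s; have := abs_nonneg s; positivity
    nlinarith [mul_self_le_mul_self h2 h1]
end

section
/- (Hardy inequality on the Schwarzschild exterior.) Let r : ℝ → (2, ∞) satisfy dr/dr* = 1 - 2/r, with r(r*) → 2 as r* → -∞ and r(r*)/r* → 1 as r* → +∞. Then there is a constant C such that for every smooth compactly supported φ : ℝ → ℝ, ∫_{-∞}^{∞} (1 + |r*|)⁻² φ(r*)² r(r*)² dr* ≤ C ∫_{-∞}^{∞} (∂_{r*}φ(r*))² r(r*)² dr*. -/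
open MeasureTheory Set Filter Topology


lemma rpos {r : ℝ → ℝ} (hr : ∀ s, 2 < r s) (s : ℝ) : 0 < r s :=
  lt_trans (by norm_num) (hr s)

lemma rcont {r : ℝ → ℝ} (hdr : ∀ s, HasDerivAt r (1 - 2 / r s) s) : Continuous r :=
  continuous_iff_continuousAt.2 fun s => (hdr s).continuousAt

lemma rmono {r : ℝ → ℝ} (hr : ∀ s, 2 < r s) (hdr : ∀ s, HasDerivAt r (1 - 2 / r s) s) :
    Monotone r := by
  refine monotone_of_deriv_nonneg (fun s => (hdr s).differentiableAt) fun s => ?_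
  rw [(hdr s).deriv]
  have h1 : 2 / r s ≤ 1 := (div_le_one (rpos hr s)).2 (hr s).le
  linarith

lemma rub {r : ℝ → ℝ} (hr : ∀ s, 2 < r s) (hdr : ∀ s, HasDerivAt r (1 - 2 / r s) s)
    (s : ℝ) : r s ≤ r 0 * (1 + |s|) := by
  have hq : Monotone (fun s => s - r s) := by
    refine monotone_of_deriv_nonneg
      (fun s => (differentiable_id s).sub (hdr s).differentiableAt) fun s => ?_
    have hd : HasDerivAt (fun s => s - r s) (1 - (1 - 2 / r s)) s := (hasDerivAt_id s).sub (hdr s)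
    rw [hd.deriv]
    have := rpos hr s
    have : 0 < 2 / r s := by positivity
    linarith
  have h0 := rpos hr 0
  rcases le_total s 0 with h | h
  · have h1 : r s ≤ r 0 := rmono hr hdr h
    have h2 : (0:ℝ) ≤ |s| := abs_nonneg s
    nlinarith
  · have h1 : (0:ℝ) - r 0 ≤ s - r s := hq h
    rw [abs_of_nonneg h]
    nlinarith [hr 0]

lemma rlb {r : ℝ → ℝ} (hr : ∀ s, 2 < r s) (hdr : ∀ s, HasDerivAt r (1 - 2 / r s) s)
    {s : ℝ} (h : 0 ≤ s) : (1 - 2 / r 0) * (1 + s) ≤ r s := by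
  have h0 := rpos hr 0
  have hδ0 : 0 < 1 - 2 / r 0 := by
    have : 2 / r 0 < 1 := (div_lt_one h0).2 (hr 0)
    linarith
  have hδ1 : 1 - 2 / r 0 < 1 := by
    have : 0 < 2 / r 0 := by positivity
    linarith
  have hp : MonotoneOn (fun s => r s - (1 - 2 / r 0) * s) (Ici (0:ℝ)) := by
    refine monotoneOn_of_deriv_nonneg (convex_Ici 0)
      (((rcont hdr).sub (continuous_const.mul continuous_id)).continuousOn) ?_ ?_
    · intro x _
      exact ((hdr x).sub ((hasDerivAt_id x).const_mul _)).differentiableAt.differentiableWithinAt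
    · intro x hx
      rw [interior_Ici] at hx
      have hd : HasDerivAt (fun s => r s - (1 - 2 / r 0) * s)
          ((1 - 2 / r x) - (1 - 2 / r 0) * 1) x :=
        (hdr x).sub ((hasDerivAt_id x).const_mul _)
      rw [hd.deriv]
      have hrx : r 0 ≤ r x := rmono hr hdr (le_of_lt hx)
      have h2 : 2 / r x ≤ 2 / r 0 := div_le_div_of_nonneg_left (by norm_num) h0 hrx
      linarith
  have h1 : r 0 - (1 - 2 / r 0) * 0 ≤ r s - (1 - 2 / r 0) * s :=
    hp (le_refl (0:ℝ)) h h
  nlinarith [hr 0]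


-- derivative of (1-t)⁻¹
lemma Fderiv {x : ℝ} (hx : x < 1) :
    HasDerivAt (fun t : ℝ => (1 - t)⁻¹) ((1 - x)⁻¹ ^ 2) x := by
  have h1 : HasDerivAt (fun t : ℝ => 1 - t) (-1) x := by
    simpa using (hasDerivAt_id x).const_sub 1
  have h2 := h1.inv (by linarith : (1:ℝ) - x ≠ 0)
  have : (1:ℝ) - x ≠ 0 := by linarith
  have h3 : (1 - x)⁻¹ ^ 2 = - -1 / (1 - x) ^ 2 := by rw [neg_neg, one_div, inv_pow]
  rw [h3]; exact h2

lemma G0int : IntegrableOn (fun t : ℝ => (1 - t)⁻¹ ^ 2) (Iic (0:ℝ)) := by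
  refine integrableOn_Iic_of_intervalIntegral_norm_bounded (l := atBot) (a := fun i : ℝ => i)
    1 0 (fun i => ?_) tendsto_id ?_
  · refine (ContinuousOn.integrableOn_Icc ?_).mono_set Ioc_subset_Icc_self
    refine ContinuousOn.pow (ContinuousOn.inv₀ (by fun_prop) fun t ht => ?_) 2
    rcases ht with ⟨h1, h2⟩
    have : t < 1 := lt_of_le_of_lt h2 one_pos
    intro hc; linarith [sub_eq_zero.mp hc]
  · filter_upwards [eventually_le_atBot (0:ℝ)] with i hi
    have hval : (∫ x in i..0, ‖(1 - x)⁻¹ ^ 2‖) = (1 - 0)⁻¹ - (1 - i)⁻¹ := by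
      have : (∫ x in i..0, ‖(1 - x)⁻¹ ^ 2‖) = ∫ x in i..0, (1 - x)⁻¹ ^ 2 := by
        apply intervalIntegral.integral_congr
        intro x hx
        simp [abs_of_nonneg (by positivity : (0:ℝ) ≤ (1 - x)⁻¹ ^ 2)]
      rw [this]
      apply intervalIntegral.integral_eq_sub_of_hasDerivAt (f := fun t : ℝ => (1 - t)⁻¹)
      · intro x hx
        rw [uIcc_of_le hi] at hx
        exact Fderiv (lt_of_le_of_lt hx.2 one_pos)
      · refine ContinuousOn.intervalIntegrable ?_
        refine ContinuousOn.pow (ContinuousOn.inv₀ (by fun_prop) fun t ht => ?_) 2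
        rw [uIcc_of_le hi] at ht
        have : t < 1 := lt_of_le_of_lt ht.2 one_pos
        intro hc; linarith [sub_eq_zero.mp hc]
    rw [hval]
    have : (0:ℝ) ≤ (1 - i)⁻¹ := inv_nonneg.2 (by linarith)
    norm_num
    linarith

lemma G0val {s : ℝ} (hs : s ≤ 0) :
    (∫ t in Iic s, (1 - t)⁻¹ ^ 2) = (1 - s)⁻¹ := by
  have h := integral_Iic_of_hasDerivAt_of_tendsto' (m := 0) (a := s)
    (f := fun t : ℝ => (1 - t)⁻¹) (f' := fun t : ℝ => (1 - t)⁻¹ ^ 2)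
    (fun x hx => Fderiv (lt_of_le_of_lt (le_trans hx hs) one_pos))
    (G0int.mono_set (Iic_subset_Iic.2 hs)) ?_
  · rw [h, sub_zero]
  · have h1 : Tendsto (fun t : ℝ => 1 - t) atBot atTop := by
      apply tendsto_atTop_add_const_left
      exact tendsto_neg_atBot_atTop
    exact tendsto_inv_atTop_zero.comp h1

lemma gcont {r : ℝ → ℝ} (hdr : ∀ s, HasDerivAt r (1 - 2 / r s) s) :
    Continuous (fun t : ℝ => (1 + |t|)⁻¹ ^ 2 * (r t) ^ 2) := by
  refine Continuous.mul (Continuous.pow ?_ 2) ((rcont hdr).pow 2)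
  exact (continuous_const.add continuous_abs).inv₀ fun t => ne_of_gt (by show (0:ℝ) < 1 + |t|; positivity)

lemma gint {r : ℝ → ℝ} (hr : ∀ s, 2 < r s) (hdr : ∀ s, HasDerivAt r (1 - 2 / r s) s)
    (s : ℝ) : IntegrableOn (fun t : ℝ => (1 + |t|)⁻¹ ^ 2 * (r t) ^ 2) (Iic s) := by
  have base : IntegrableOn (fun t : ℝ => (1 + |t|)⁻¹ ^ 2 * (r t) ^ 2) (Iic (0:ℝ)) := by
    have hbound : IntegrableOn (fun t : ℝ => (r 0) ^ 2 * ((1 - t)⁻¹ ^ 2)) (Iic (0:ℝ)) :=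
      G0int.const_mul _
    refine Integrable.mono hbound ((gcont hdr).aestronglyMeasurable.restrict) ?_
    rw [ae_restrict_iff' measurableSet_Iic]
    refine Eventually.of_forall fun t ht => ?_
    have ht0 : t ≤ 0 := ht
    have habs : |t| = -t := abs_of_nonpos ht0
    have h1 : r t ≤ r 0 := rmono hr hdr ht0
    have h2 : 0 < r t := rpos hr t
    have h3 : (0:ℝ) < 1 - t := by linarith
    rw [Real.norm_eq_abs, Real.norm_eq_abs, habs]
    rw [abs_of_nonneg (by positivity), abs_of_nonneg (by positivity)]
    have : (1 + -t)⁻¹ ^ 2 = (1 - t)⁻¹ ^ 2 := by ring_nf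
    rw [this]
    have h4 : (r t) ^ 2 ≤ (r 0) ^ 2 := by nlinarith
    have h5 : (0:ℝ) ≤ (1 - t)⁻¹ ^ 2 := by positivity
    nlinarith
  rcases le_total s 0 with h | h
  · exact base.mono_set (Iic_subset_Iic.2 h)
  · rw [← Iic_union_Ioc_eq_Iic h]
    exact base.union (((gcont hdr).continuousOn.integrableOn_Icc).mono_set Ioc_subset_Icc_self)

lemma hsfderiv {r : ℝ → ℝ} (hr : ∀ s, 2 < r s) (hdr : ∀ s, HasDerivAt r (1 - 2 / r s) s)
    (s₀ : ℝ) :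
    HasDerivAt (fun s => ∫ t in Iic s, (1 + |t|)⁻¹ ^ 2 * (r t) ^ 2)
      ((1 + |s₀|)⁻¹ ^ 2 * (r s₀) ^ 2) s₀ := by
  set G := fun t : ℝ => (1 + |t|)⁻¹ ^ 2 * (r t) ^ 2 with hG
  have heq : ∀ s, (∫ t in Iic s, G t) = (∫ t in Iic (s₀ - 1), G t) + ∫ t in (s₀ - 1)..s, G t := by
    intro s
    have h := intervalIntegral.integral_Iic_sub_Iic (gint hr hdr (s₀ - 1)) (gint hr hdr s)
    linarith
  have hd : HasDerivAt (fun s => (∫ t in Iic (s₀ - 1), G t) + ∫ t in (s₀ - 1)..s, G t)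
      (G s₀) s₀ := by
    refine HasDerivAt.const_add _ ?_
    refine intervalIntegral.integral_hasDerivAt_right
      ((gcont hdr).intervalIntegrable _ _)
      ((gcont hdr).stronglyMeasurableAtFilter _ _)
      (gcont hdr).continuousAt
  exact hd.congr_of_eventuallyEq (Eventually.of_forall heq)

lemma fnonneg {r : ℝ → ℝ} (s : ℝ) :
    0 ≤ ∫ t in Iic s, (1 + |t|)⁻¹ ^ 2 * (r t) ^ 2 :=
  setIntegral_nonneg measurableSet_Iic fun t _ => by positivity

lemma fub {r : ℝ → ℝ} (hr : ∀ s, 2 < r s) (hdr : ∀ s, HasDerivAt r (1 - 2 / r s) s)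
    (s : ℝ) :
    (∫ t in Iic s, (1 + |t|)⁻¹ ^ 2 * (r t) ^ 2) * (1 + |s|) ≤
      ((r 0) ^ 2 / (1 - 2 / r 0) ^ 2) * (r s) ^ 2 := by
  have h0 := rpos hr 0
  have hδ0 : 0 < 1 - 2 / r 0 := by
    have : 2 / r 0 < 1 := (div_lt_one h0).2 (hr 0)
    linarith
  have hδ1 : 1 - 2 / r 0 ≤ 1 := by
    have : 0 ≤ 2 / r 0 := by positivity
    linarith
  have hK1 : (1:ℝ) ≤ (r 0) ^ 2 / (1 - 2 / r 0) ^ 2 := by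
    rw [le_div_iff₀ (by positivity)]
    nlinarith [hr 0]
  -- key bound for s ≤ 0
  have neg_case : ∀ s : ℝ, s ≤ 0 →
      (∫ t in Iic s, (1 + |t|)⁻¹ ^ 2 * (r t) ^ 2) ≤ (r s) ^ 2 * (1 - s)⁻¹ := by
    intro s hs
    have hmono : (∫ t in Iic s, (1 + |t|)⁻¹ ^ 2 * (r t) ^ 2) ≤
        ∫ t in Iic s, (r s) ^ 2 * ((1 - t)⁻¹ ^ 2) := by
      refine setIntegral_mono_on (gint hr hdr s)
        ((G0int.mono_set (Iic_subset_Iic.2 hs)).const_mul _) measurableSet_Iic ?_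
      intro t ht
      have ht' : t ≤ s := ht
      have ht0 : t ≤ 0 := le_trans ht' hs
      have habs : |t| = -t := abs_of_nonpos ht0
      have h1 : r t ≤ r s := rmono hr hdr ht'
      have h2 : 0 < r t := rpos hr t
      rw [habs]
      have he : (1 + -t)⁻¹ ^ 2 = (1 - t)⁻¹ ^ 2 := by ring_nf
      rw [he]
      have h5 : (0:ℝ) ≤ (1 - t)⁻¹ ^ 2 := by positivity
      have h4 : r t ^ 2 ≤ r s ^ 2 := by nlinarith
      calc (1 - t)⁻¹ ^ 2 * r t ^ 2 ≤ (1 - t)⁻¹ ^ 2 * r s ^ 2 := by nlinarith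
        _ = r s ^ 2 * (1 - t)⁻¹ ^ 2 := by ring
    calc (∫ t in Iic s, (1 + |t|)⁻¹ ^ 2 * (r t) ^ 2)
        ≤ ∫ t in Iic s, (r s) ^ 2 * ((1 - t)⁻¹ ^ 2) := hmono
      _ = (r s) ^ 2 * ∫ t in Iic s, (1 - t)⁻¹ ^ 2 := by rw [integral_const_mul]
      _ = (r s) ^ 2 * (1 - s)⁻¹ := by rw [G0val hs]
  rcases le_total s 0 with h | h
  · have h1 := neg_case s h
    have habs : |s| = -s := abs_of_nonpos h
    rw [habs]
    have h2 : (0:ℝ) < 1 - s := by linarith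
    have h3 : (∫ t in Iic s, (1 + |t|)⁻¹ ^ 2 * (r t) ^ 2) * (1 + -s) ≤ (r s) ^ 2 := by
      have := mul_le_mul_of_nonneg_right h1 (le_of_lt h2)
      have he : (r s) ^ 2 * (1 - s)⁻¹ * (1 - s) = (r s) ^ 2 := by
        field_simp
      calc (∫ t in Iic s, (1 + |t|)⁻¹ ^ 2 * (r t) ^ 2) * (1 + -s)
          = (∫ t in Iic s, (1 + |t|)⁻¹ ^ 2 * (r t) ^ 2) * (1 - s) := by ring_nf
        _ ≤ (r s) ^ 2 * (1 - s)⁻¹ * (1 - s) := this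
        _ = (r s) ^ 2 := he
    have hr2 : (0:ℝ) ≤ (r s)^2 := by positivity
    nlinarith
  · -- s ≥ 0
    have habs : |s| = s := abs_of_nonneg h
    rw [habs]
    have hsplit : (∫ t in Iic s, (1 + |t|)⁻¹ ^ 2 * (r t) ^ 2) =
        (∫ t in Iic (0:ℝ), (1 + |t|)⁻¹ ^ 2 * (r t) ^ 2) +
          ∫ t in (0:ℝ)..s, (1 + |t|)⁻¹ ^ 2 * (r t) ^ 2 := by
      have := intervalIntegral.integral_Iic_sub_Iic (gint hr hdr 0) (gint hr hdr s)
      linarith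
    have hf0 : (∫ t in Iic (0:ℝ), (1 + |t|)⁻¹ ^ 2 * (r t) ^ 2) ≤ (r 0) ^ 2 := by
      have := neg_case 0 le_rfl
      simpa using this
    have hmid : (∫ t in (0:ℝ)..s, (1 + |t|)⁻¹ ^ 2 * (r t) ^ 2) ≤ (r 0) ^ 2 * s := by
      have hb : (∫ t in (0:ℝ)..s, (1 + |t|)⁻¹ ^ 2 * (r t) ^ 2) ≤
          ∫ t in (0:ℝ)..s, (r 0) ^ 2 := by
        refine intervalIntegral.integral_mono_on h
          ((gcont hdr).intervalIntegrable _ _) intervalIntegrable_const ?_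
        intro t ht
        have ht0 : 0 ≤ t := ht.1
        have habt : |t| = t := abs_of_nonneg ht0
        rw [habt]
        have h1 : r t ≤ r 0 * (1 + t) := by
          have := rub hr hdr t
          rwa [abs_of_nonneg ht0] at this
        have h2 : 0 < r t := rpos hr t
        have h3 : (0:ℝ) < 1 + t := by linarith
        have h4 : (r t) ^ 2 ≤ (r 0) ^ 2 * (1 + t) ^ 2 := by nlinarith
        have h5 : (1 + t)⁻¹ ^ 2 * ((r 0) ^ 2 * (1 + t) ^ 2) = (r 0) ^ 2 := by
          field_simp
        calc (1 + t)⁻¹ ^ 2 * (r t) ^ 2 ≤ (1 + t)⁻¹ ^ 2 * ((r 0) ^ 2 * (1 + t) ^ 2) := by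
              have : (0:ℝ) ≤ (1 + t)⁻¹ ^ 2 := by positivity
              nlinarith
          _ = (r 0) ^ 2 := h5
      have hc : (∫ t in (0:ℝ)..s, (r 0) ^ 2) = (r 0) ^ 2 * s := by
        simp [mul_comm]
      linarith [hb, hc.le, hc.ge]
    have hfs : (∫ t in Iic s, (1 + |t|)⁻¹ ^ 2 * (r t) ^ 2) ≤ (r 0) ^ 2 * (1 + s) := by
      rw [hsplit]; nlinarith
    have hlbs : (1 - 2 / r 0) * (1 + s) ≤ r s := rlb hr hdr h
    have hfnn := fnonneg (r := r) s
    have h1s : (0:ℝ) < 1 + s := by linarith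
    -- (f s) * (1+s) ≤ r0² (1+s)² ≤ (r0²/δ²) * (r s)²
    have step1 : (∫ t in Iic s, (1 + |t|)⁻¹ ^ 2 * (r t) ^ 2) * (1 + s) ≤
        (r 0) ^ 2 * (1 + s) ^ 2 := by nlinarith
    have step2 : (r 0) ^ 2 * (1 + s) ^ 2 ≤ ((r 0) ^ 2 / (1 - 2 / r 0) ^ 2) * (r s) ^ 2 := by
      rw [div_mul_eq_mul_div, le_div_iff₀ (by positivity)]
      have hrs : 0 < r s := rpos hr s
      have hsq : ((1 - 2 / r 0) * (1 + s)) ^ 2 ≤ (r s) ^ 2 := by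
        have hnn : (0:ℝ) ≤ (1 - 2 / r 0) * (1 + s) := by positivity
        have := mul_self_le_mul_self hnn hlbs
        nlinarith [this]
      have hmm := mul_le_mul_of_nonneg_left hsq (sq_nonneg (r 0))
      have hre : r 0 ^ 2 * (1 + s) ^ 2 * (1 - 2 / r 0) ^ 2
          = r 0 ^ 2 * ((1 - 2 / r 0) * (1 + s)) ^ 2 := by ring
      linarith [hre.le, hre.ge, hmm]
    linarith

lemma ptwise {G P F a b : ℝ} (hG : 0 < G) (hF : 0 ≤ F) (hP : 0 ≤ P) (h : F ^ 2 ≤ G * P) :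
    |F * (b * a + a * b)| ≤ (1/2) * (G * (a * a)) + 2 * (P * b ^ 2) := by
  have habs : |F * (b * a + a * b)| = 2 * F * (|a| * |b|) := by
    rw [show F * (b * a + a * b) = 2 * F * (a * b) by ring]
    rw [abs_mul, abs_mul, abs_mul, abs_of_nonneg hF, abs_two]
  rw [habs]
  rw [show (1/2) * (G * (a * a)) + 2 * (P * b ^ 2)
      = ((1/2) * (G * (|a| * |a|)) + 2 * (P * |b| ^ 2)) from by
    rw [← abs_mul, abs_mul_self, sq_abs]]
  set A := |a| with hA
  set B := |b| with hB
  have hA0 : 0 ≤ A := abs_nonneg a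
  have hB0 : 0 ≤ B := abs_nonneg b
  have key : 2 * F * (A * B) * G ≤ ((1/2) * (G * (A * A)) + 2 * (P * B ^ 2)) * G := by
    have h1 : 0 ≤ (G * A - 2 * (F * B)) ^ 2 := sq_nonneg _
    have h2 : F ^ 2 * B ^ 2 ≤ G * P * B ^ 2 :=
      mul_le_mul_of_nonneg_right h (sq_nonneg B)
    nlinarith [h1, h2, mul_pos hG hG]
  exact le_of_mul_le_mul_right key hG

/-- Hardy inequality on the Schwarzschild exterior (radial version):
`∫ (1+|r*|)⁻² φ² r² dr* ≤ C ∫ (∂_{r*}φ)² r² dr*`. -/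
theorem hardy_schwarzschild (r : ℝ → ℝ)
    (hr : ∀ s, 2 < r s)
    (hdr : ∀ s, HasDerivAt r (1 - 2 / r s) s)
    (hbot : Filter.Tendsto r Filter.atBot (nhds 2))
    (htop : Filter.Tendsto (fun s => r s / s) Filter.atTop (nhds 1)) :
    ∃ C : ℝ, ∀ φ : ℝ → ℝ, ContDiff ℝ (⊤ : ℕ∞) φ → HasCompactSupport φ →
      (∫ s : ℝ, (1 + |s|)⁻¹ ^ 2 * (φ s) ^ 2 * (r s) ^ 2) ≤
        C * ∫ s : ℝ, (deriv φ s) ^ 2 * (r s) ^ 2 := by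
  classical
  set K : ℝ := (r 0) ^ 2 / (1 - 2 / r 0) ^ 2 with hKdef
  have h0 := rpos hr 0
  have hδ0 : 0 < 1 - 2 / r 0 := by
    have : 2 / r 0 < 1 := (div_lt_one h0).2 (hr 0)
    linarith
  have hK0 : 0 < K := by positivity
  refine ⟨4 * K ^ 2, ?_⟩
  intro φ hφ hφc
  set G : ℝ → ℝ := fun t => (1 + |t|)⁻¹ ^ 2 * (r t) ^ 2 with hGdef
  set F : ℝ → ℝ := fun s => ∫ t in Iic s, G t with hFdef
  set ψ : ℝ → ℝ := deriv φ with hψdef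
  have hGc : Continuous G := gcont hdr
  have hFd : ∀ s, HasDerivAt F (G s) s := hsfderiv hr hdr
  have hFc : Continuous F :=
    continuous_iff_continuousAt.2 fun s => (hFd s).continuousAt
  have hψc : Continuous ψ := hφ.continuous_deriv (by simp)
  have hφcont : Continuous φ := hφ.continuous
  have hφd : ∀ s, HasDerivAt φ (ψ s) s := fun s =>
    (hφ.differentiable (by simp) s).hasDerivAt
  have hψsupp : HasCompactSupport ψ := hφc.deriv
  have hGpos : ∀ s, 0 < G s := fun s => by
    have := rpos hr s
    simp only [hGdef]
    positivity
  have hFub : ∀ s, F s * (1 + |s|) ≤ K * (r s) ^ 2 := fub hr hdr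
  have hFnn : ∀ s, 0 ≤ F s := fun s => fnonneg s
  -- the divergence identity
  set D : ℝ → ℝ := fun s => G s * (φ s * φ s) + F s * (ψ s * φ s + φ s * ψ s) with hDdef
  have hh : ∀ s, HasDerivAt (fun u => F u * (φ u * φ u)) (D s) s := fun s =>
    (hFd s).mul ((hφd s).mul (hφd s))
  have hsupp1 : HasCompactSupport (fun s => φ s * φ s) := hφc.mul_left
  have hhsupp : HasCompactSupport (fun s => F s * (φ s * φ s)) := hsupp1.mul_left
  have hs2 : HasCompactSupport (fun s => ψ s * φ s + φ s * ψ s) :=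
    (hφc.mul_left).add (hψsupp.mul_left)
  have hDsupp : HasCompactSupport D := (hsupp1.mul_left).add (hs2.mul_left)
  have hDc : Continuous D :=
    (hGc.mul (hφcont.mul hφcont)).add
      (hFc.mul ((hψc.mul hφcont).add (hφcont.mul hψc)))
  have hDint : Integrable D := hDc.integrable_of_hasCompactSupport hDsupp
  obtain ⟨b₀, hb₀⟩ : ∃ b₀, b₀ ∈ upperBounds (tsupport φ) := hφc.isCompact.bddAbove
  have houtside : ∀ x, x ∉ Iic (b₀ + 1) → D x = 0 := by
    intro x hx
    have hx1 : b₀ + 1 < x := by simpa [Iic] using not_le.mp hx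
    have hxn : x ∉ tsupport φ := fun hmem => by
      have := hb₀ hmem; linarith
    have hφx : φ x = 0 := image_eq_zero_of_notMem_tsupport hxn
    have hψx : ψ x = 0 := by
      by_contra hne
      exact hxn (support_deriv_subset (by simpa [hψdef] using hne))
    simp [hDdef, hφx, hψx]
  have htend : Tendsto (fun s => F s * (φ s * φ s)) atBot (𝓝 0) := by
    have h2 := hhsupp
    rw [hasCompactSupport_iff_eventuallyEq, Filter.coclosedCompact_eq_cocompact] at h2
    exact (h2.filter_mono atBot_le_cocompact).tendsto
  have hIic : (∫ s in Iic (b₀ + 1), D s) =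
      F (b₀ + 1) * (φ (b₀ + 1) * φ (b₀ + 1)) - 0 :=
    integral_Iic_of_hasDerivAt_of_tendsto' (fun x _ => hh x) hDint.integrableOn htend
  have hφb : φ (b₀ + 1) = 0 := by
    apply image_eq_zero_of_notMem_tsupport
    intro hmem
    have := hb₀ hmem; linarith
  have hDzero : (∫ s, D s) = 0 := by
    rw [← setIntegral_eq_integral_of_forall_compl_eq_zero houtside, hIic, hφb]
    ring
  -- split the integral
  have hint1 : Integrable (fun s => G s * (φ s * φ s)) :=
    (hGc.mul (hφcont.mul hφcont)).integrable_of_hasCompactSupport hsupp1.mul_left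
  have hint2 : Integrable (fun s => F s * (ψ s * φ s + φ s * ψ s)) :=
    (hFc.mul ((hψc.mul hφcont).add (hφcont.mul hψc))).integrable_of_hasCompactSupport
      hs2.mul_left
  have hkey : (∫ s, G s * (φ s * φ s)) = - ∫ s, F s * (ψ s * φ s + φ s * ψ s) := by
    have hadd := integral_add hint1 hint2
    simp only [hDdef] at hDzero
    rw [hDzero] at hadd
    linarith
  -- pointwise bound
  have hpt : ∀ s, |F s * (ψ s * φ s + φ s * ψ s)| ≤
      (1/2) * (G s * (φ s * φ s)) + (2 * K ^ 2) * ((ψ s) ^ 2 * (r s) ^ 2) := by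
    intro s
    have hsq : (F s) ^ 2 ≤ G s * (K ^ 2 * (r s) ^ 2) := by
      have h1 : (0:ℝ) < 1 + |s| := by positivity
      have h2 := hFub s
      have hnn : 0 ≤ F s * (1 + |s|) := mul_nonneg (hFnn s) h1.le
      have h3 : (F s * (1 + |s|)) ^ 2 ≤ (K * (r s) ^ 2) ^ 2 := by
        nlinarith [mul_self_le_mul_self hnn h2]
      have h4 : G s * (K ^ 2 * (r s) ^ 2) = (K * (r s) ^ 2) ^ 2 * ((1 + |s|)⁻¹ ^ 2) := by
        simp only [hGdef]; ring
      rw [h4]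
      calc (F s) ^ 2 = (F s * (1 + |s|)) ^ 2 * ((1 + |s|)⁻¹ ^ 2) := by
            field_simp
        _ ≤ (K * (r s) ^ 2) ^ 2 * ((1 + |s|)⁻¹ ^ 2) :=
            mul_le_mul_of_nonneg_right h3 (by positivity)
    have h := ptwise (a := φ s) (b := ψ s) (hGpos s) (hFnn s)
      (by positivity : (0:ℝ) ≤ K ^ 2 * (r s) ^ 2) hsq
    calc |F s * (ψ s * φ s + φ s * ψ s)|
        ≤ (1/2) * (G s * (φ s * φ s)) + 2 * ((K ^ 2 * (r s) ^ 2) * (ψ s) ^ 2) := h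
      _ = (1/2) * (G s * (φ s * φ s)) + (2 * K ^ 2) * ((ψ s) ^ 2 * (r s) ^ 2) := by ring
  -- integrability of the majorant
  have hint3 : Integrable (fun s => (ψ s) ^ 2 * (r s) ^ 2) := by
    refine ((hψc.pow 2).mul ((rcont hdr).pow 2)).integrable_of_hasCompactSupport ?_
    have e : ψ ^ 2 * r ^ 2 = fun s => ψ s ^ 2 * r s ^ 2 := by ext s; simp
    rw [e]
    exact (hψsupp.comp_left (g := fun x : ℝ => x ^ 2) (by simp)).mul_right
  have hint4 : Integrable (fun s =>
      (1/2) * (G s * (φ s * φ s)) + (2 * K ^ 2) * ((ψ s) ^ 2 * (r s) ^ 2)) :=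
    (hint1.const_mul _).add (hint3.const_mul _)
  have habsle : (∫ s, G s * (φ s * φ s)) ≤ ∫ s, |F s * (ψ s * φ s + φ s * ψ s)| := by
    rw [hkey]
    have h1 := norm_integral_le_integral_norm (μ := MeasureTheory.volume)
      (f := fun s => F s * (ψ s * φ s + φ s * ψ s))
    simp only [Real.norm_eq_abs] at h1
    have h2 := neg_le_abs (∫ s, F s * (ψ s * φ s + φ s * ψ s))
    linarith
  have hmono2 : (∫ s, |F s * (ψ s * φ s + φ s * ψ s)|) ≤
      ∫ s, ((1/2) * (G s * (φ s * φ s)) + (2 * K ^ 2) * ((ψ s) ^ 2 * (r s) ^ 2)) :=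
    integral_mono hint2.abs hint4 hpt
  have hsplit2 : (∫ s, ((1/2) * (G s * (φ s * φ s)) + (2 * K ^ 2) * ((ψ s) ^ 2 * (r s) ^ 2)))
      = (1/2) * (∫ s, G s * (φ s * φ s)) + (2 * K ^ 2) * ∫ s, (ψ s) ^ 2 * (r s) ^ 2 := by
    rw [integral_add (hint1.const_mul _) (hint3.const_mul _), integral_const_mul,
      integral_const_mul]
  have hY : 0 ≤ ∫ s, (ψ s) ^ 2 * (r s) ^ 2 := integral_nonneg fun s => by positivity
  have hfinal : (∫ s, G s * (φ s * φ s)) ≤ 4 * K ^ 2 * ∫ s, (ψ s) ^ 2 * (r s) ^ 2 := by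
    have hchain := habsle.trans (hmono2.trans_eq hsplit2)
    linarith
  have hLHS : (∫ s : ℝ, (1 + |s|)⁻¹ ^ 2 * (φ s) ^ 2 * (r s) ^ 2)
      = ∫ s, G s * (φ s * φ s) := by
    congr 1
    funext s
    simp only [hGdef]
    ring
  rw [hLHS]
  exact hfinal
end

section
/- Let F : ℝ → [0, ∞) be C¹ nondecreasing with F(r*) → 0 as r* → -∞, and suppose there are C¹ functions r, μ with μ = 2/r, dr/dr* = 1 - μ, r > 2, such that (r/2)(1-μ)⁻¹ F'(r*) ≤ F(r*) + 4E for all r*, where E ≥ 0 is a constant. Then F(r*) ≤ 4 μ(r*)⁻² E for all r*. -/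
/-!
With `r' = 1 - 2/r` one has `(r²)' = 2(r - 2)`, so the hypothesis says exactly that
`(F + 4E) / r²` is nonincreasing; this is the integrating factor `exp ∫ 2r⁻¹(1 - μ) = r²/4`
of the Grönwall argument. Since `r > 2` and `F ≥ 0`, this quotient is at most `(F + 4E)/4`,
which tends to `E` at `-∞`. Hence `(F + 4E)/r² ≤ E` everywhere, i.e. `F ≤ E r² - 4E ≤ 4μ⁻²E`.
-/

open Filter Topology

theorem antitone_div_of_hasDerivAt {f f' g g' : ℝ → ℝ}
    (hf : ∀ x, HasDerivAt f (f' x) x) (hg : ∀ x, HasDerivAt g (g' x) x) (hg0 : ∀ x, g x ≠ 0)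
    (h : ∀ x, f' x * g x ≤ f x * g' x) :
    Antitone fun x => f x / g x :=
  antitone_of_hasDerivAt_nonpos (fun x => (hf x).div (hg x) (hg0 x))
    fun x => div_nonpos_of_nonpos_of_nonneg (sub_nonpos.2 (h x)) (sq_nonneg _)

theorem Antitone.le_of_le_of_tendsto_atBot {α β : Type*} [TopologicalSpace α] [Preorder α]
    [OrderClosedTopology α] [Preorder β] [IsCodirectedOrder β] {f u : β → α} {a : α}
    (hf : Antitone f) (hfu : ∀ x, f x ≤ u x) (hu : Tendsto u atBot (𝓝 a)) (b : β) :
    f b ≤ a :=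
  haveI : Nonempty β := ⟨b⟩
  _root_.ge_of_tendsto hu ((eventually_le_atBot b).mono fun _ hx => (hf hx).trans (hfu _))

theorem hasDerivAt_sq_of_hasDerivAt_one_sub_two_div {r : ℝ → ℝ} {s : ℝ} (hr : r s ≠ 0)
    (hdr : HasDerivAt r (1 - 2 / r s) s) :
    HasDerivAt (fun s => r s ^ 2) (2 * (r s - 2)) s := by
  refine (hdr.fun_pow 2).congr_deriv ?_
  field_simp
  ring

theorem mul_sq_le_of_mul_inv_le {a b r : ℝ} (hr : 2 < r)
    (h : r / 2 * (1 - 2 / r)⁻¹ * a ≤ b) :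
    a * r ^ 2 ≤ b * (2 * (r - 2)) := by
  have hr0 : r ≠ 0 := by positivity
  have hfactor : r / 2 * (1 - 2 / r)⁻¹ = r ^ 2 / (2 * (r - 2)) := by
    field_simp
  rw [hfactor, div_mul_eq_mul_div, div_le_iff₀ (by linarith)] at h
  linarith

theorem gronwall_ell_zero_general (F F' r : ℝ → ℝ) (E : ℝ) (hE : 0 ≤ E)
    (hFnonneg : ∀ s, 0 ≤ F s)
    (hF' : ∀ s, HasDerivAt F (F' s) s)
    (hFbot : Filter.Tendsto F Filter.atBot (nhds 0))
    (hr : ∀ s, 2 < r s)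
    (hdr : ∀ s, HasDerivAt r (1 - 2 / r s) s)
    (hineq : ∀ s, (r s / 2) * (1 - 2 / r s)⁻¹ * F' s ≤ F s + 4 * E) :
    ∀ s, F s ≤ 4 * ((2 / r s)⁻¹) ^ 2 * E := by
  have hr0 : ∀ s, r s ≠ 0 := fun s => by linarith [hr s]
  have hanti : Antitone fun s => (F s + 4 * E) / r s ^ 2 :=
    antitone_div_of_hasDerivAt (fun s => (hF' s).add_const _)
      (fun s => hasDerivAt_sq_of_hasDerivAt_one_sub_two_div (hr0 s) (hdr s))
      (fun s => pow_ne_zero 2 (hr0 s)) fun s => mul_sq_le_of_mul_inv_le (hr s) (hineq s)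
  have hbound : ∀ t, (F t + 4 * E) / r t ^ 2 ≤ (F t + 4 * E) / 4 := fun t =>
    div_le_div_of_nonneg_left (by linarith [hFnonneg t]) (by norm_num)
      (by nlinarith [hr t])
  have hlim : Tendsto (fun t => (F t + 4 * E) / 4) atBot (𝓝 E) := by
    simpa using (hFbot.add_const (4 * E)).div_const 4
  intro s
  have hs := hanti.le_of_le_of_tendsto_atBot hbound hlim s
  rw [div_le_iff₀ (pow_pos (by linarith [hr s]) 2)] at hs
  have hgoal : 4 * ((2 / r s)⁻¹) ^ 2 * E = E * r s ^ 2 := by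
    field_simp
    ring
  rw [hgoal]
  linarith

/-- Grönwall-type argument for the `ℓ = 0` estimate: if
`(r/2)(1-μ)⁻¹ F' ≤ F + 4E` with `μ = 2/r`, `dr/dr* = 1-μ`, `r > 2`, `F ≥ 0`
nondecreasing with `F → 0` at `-∞`, then `F ≤ 4 μ⁻² E`. -/
theorem gronwall_ell_zero (F F' r : ℝ → ℝ) (E : ℝ) (hE : 0 ≤ E)
    (hFnonneg : ∀ s, 0 ≤ F s) (hFmono : Monotone F)
    (hF' : ∀ s, HasDerivAt F (F' s) s)
    (hFbot : Filter.Tendsto F Filter.atBot (nhds 0))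
    (hr : ∀ s, 2 < r s)
    (hdr : ∀ s, HasDerivAt r (1 - 2 / r s) s)
    (hineq : ∀ s, (r s / 2) * (1 - 2 / r s)⁻¹ * F' s ≤ F s + 4 * E) :
    ∀ s, F s ≤ 4 * ((2 / r s)⁻¹) ^ 2 * E :=
  gronwall_ell_zero_general F F' r E hE hFnonneg hF' hFbot hr hdr hineq
end

section
/- Let μ = 2/r with r > 2 and dr/dr* = 1 - μ. The function G(r*) = ℓ(ℓ+1)(2-3μ)/(2r³) + (3-4μ)/r⁴ with ℓ ≥ 1 has exactly one zero r* = -γ_ℓ, and -4/3 ≤ r*(r = 8/3) ≤ -γ_ℓ ≤ r*(r = 3) = 0, where r* is normalized so that r*(3) = 0. -/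
/-! With `L = ℓ(ℓ+1)` one has `G = N(r)/r⁵` for the cubic `N(r) = L r (r - 3) + 3r - 8`, which is
strictly increasing on `r > 2`, nonpositive at `r = 8/3` and nonnegative at `r = 3`; so `G` has a
single zero, at some `r ∈ [8/3, 3]`, and since `r` is a strictly increasing bijection onto
`(2, ∞)`, the zero `s₀` in `r*` lies in `[r*(8/3), 0]`. For the lower bound, `dr/dr* = 1 - 2/r ≥ 1/4`
on `r ≥ 8/3`, so going from `r = 8/3` to `r = 3` takes at most `(1/3)/(1/4) = 4/3` in `r*`. -/

open Set

def coeffNumerator (L x : ℝ) : ℝ := L * x * (x - 3) + 3 * x - 8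

lemma coeff_eq_coeffNumerator_div {x : ℝ} (hx : x ≠ 0) (L : ℝ) :
    L * (2 - 3 * (2 / x)) / (2 * x ^ 3) + (3 - 4 * (2 / x)) / x ^ 4
      = coeffNumerator L x / x ^ 5 := by
  unfold coeffNumerator
  field_simp
  ring

lemma coeffNumerator_strictMonoOn {L : ℝ} (hL : 0 ≤ L) :
    StrictMonoOn (coeffNumerator L) (Ioi 2) := by
  intro x hx y hy hxy
  have hfactor : coeffNumerator L y - coeffNumerator L x = (y - x) * (L * (x + y - 3) + 3) := by
    unfold coeffNumerator; ring
  have hpos : 0 < L * (x + y - 3) + 3 := by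
    have : 0 ≤ L * (x + y - 3) := mul_nonneg hL (by linarith [mem_Ioi.mp hx, mem_Ioi.mp hy])
    linarith
  nlinarith [mul_pos (sub_pos.mpr hxy) hpos]

lemma exists_coeffNumerator_eq_zero {L : ℝ} (hL : 0 ≤ L) :
    ∃ x ∈ Icc (8 / 3 : ℝ) 3, coeffNumerator L x = 0 := by
  have hcont : Continuous (coeffNumerator L) := by unfold coeffNumerator; fun_prop
  have hleft : coeffNumerator L (8 / 3) ≤ 0 := by unfold coeffNumerator; nlinarith
  have hright : 0 ≤ coeffNumerator L 3 := by unfold coeffNumerator; norm_num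
  exact intermediate_value_Icc (by norm_num) hcont.continuousOn ⟨hleft, hright⟩

/-- `dr/dr* = 1 - 2/r` increases with `r*`, so on `[a, b]` it is bounded below by its value at `a`. -/
lemma tortoise_mul_sub_le_sub {r : ℝ → ℝ} (hmono : Monotone r)
    (hdr : ∀ s, HasDerivAt r (1 - 2 / r s) s) {a b : ℝ} (ha : 0 < r a) (hab : a ≤ b) :
    (1 - 2 / r a) * (b - a) ≤ r b - r a := by
  have hdiff : Differentiable ℝ r := fun s => (hdr s).differentiableAt
  refine (convex_Icc a b).mul_sub_le_image_sub_of_le_deriv hdiff.continuous.continuousOn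
    hdiff.differentiableOn (fun s hs => ?_) a (left_mem_Icc.mpr hab) b (right_mem_Icc.mpr hab) hab
  rw [interior_Icc] at hs
  have hras : r a ≤ r s := hmono hs.1.le
  rw [(hdr s).deriv]
  gcongr

theorem coefficient_zero_location_general (r : ℝ → ℝ) (ℓ : ℕ)
    (hrange : Set.range r = Set.Ioi (2 : ℝ))
    (hmono : StrictMono r)
    (hdr : ∀ s, HasDerivAt r (1 - 2 / r s) s)
    (hnorm : r 0 = 3) :
    ∃ s₀ : ℝ,
      (∀ s, (ℓ * (ℓ + 1) * (2 - 3 * (2 / r s)) / (2 * (r s) ^ 3)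
          + (3 - 4 * (2 / r s)) / (r s) ^ 4 = 0) ↔ s = s₀) ∧
      -4 / 3 ≤ s₀ ∧ s₀ ≤ 0 ∧
      ∀ s₈, r s₈ = 8 / 3 → -4 / 3 ≤ s₈ ∧ s₈ ≤ s₀ := by
  have hr2 : ∀ s, r s ∈ Ioi 2 := fun s => hrange ▸ mem_range_self s
  have hL : (0 : ℝ) ≤ ℓ * (ℓ + 1) := by positivity
  obtain ⟨x₀, ⟨hx₀8, hx₀3⟩, hx₀⟩ := exists_coeffNumerator_eq_zero hL
  obtain ⟨s₀, rfl⟩ : x₀ ∈ range r := hrange ▸ (by norm_num; linarith : x₀ ∈ Ioi (2 : ℝ))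
  have hlower : ∀ s₈, r s₈ = 8 / 3 → -4 / 3 ≤ s₈ ∧ s₈ ≤ s₀ := by
    intro s₈ hs₈
    have hs₈0 : s₈ ≤ 0 := hmono.le_iff_le.mp (by rw [hs₈, hnorm]; norm_num)
    have hmvt := tortoise_mul_sub_le_sub hmono.monotone hdr (by rw [hs₈]; norm_num) hs₈0
    rw [hs₈, hnorm] at hmvt
    exact ⟨by linarith, hmono.le_iff_le.mp (hs₈ ▸ hx₀8)⟩
  obtain ⟨s₈, hs₈⟩ : (8 / 3 : ℝ) ∈ range r := hrange ▸ (by norm_num : (8 / 3 : ℝ) ∈ Ioi 2)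
  refine ⟨s₀, fun s => ?_, ?_, hmono.le_iff_le.mp (hnorm ▸ hx₀3), hlower⟩
  · rw [coeff_eq_coeffNumerator_div (by linarith [mem_Ioi.mp (hr2 s)]), div_eq_zero_iff,
      or_iff_left (pow_ne_zero 5 (by linarith [mem_Ioi.mp (hr2 s)])), ← hx₀,
      (coeffNumerator_strictMonoOn hL).injOn.eq_iff (hr2 s) (hr2 s₀), hmono.injective.eq_iff]
  · linarith [hlower s₈ hs₈]

/-- The coefficient `G = ℓ(ℓ+1)(2-3μ)/(2r³) + (3-4μ)/r⁴` (with `μ = 2/r`,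
`ℓ ≥ 1`, Schwarzschild `M = 1`, `r*` normalized so that `r*(3) = 0`) has
exactly one zero `-γ_ℓ`, and `-4/3 ≤ r*(8/3) ≤ -γ_ℓ ≤ r*(3) = 0`. -/
theorem coefficient_zero_location (r : ℝ → ℝ) (ℓ : ℕ) (hℓ : 1 ≤ ℓ)
    (hrange : Set.range r = Set.Ioi (2 : ℝ))
    (hmono : StrictMono r)
    (hdr : ∀ s, HasDerivAt r (1 - 2 / r s) s)
    (hnorm : r 0 = 3) :
    ∃ s₀ : ℝ,
      (∀ s, (ℓ * (ℓ + 1) * (2 - 3 * (2 / r s)) / (2 * (r s) ^ 3)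
          + (3 - 4 * (2 / r s)) / (r s) ^ 4 = 0) ↔ s = s₀) ∧
      -4 / 3 ≤ s₀ ∧ s₀ ≤ 0 ∧
      ∀ s₈, r s₈ = 8 / 3 → -4 / 3 ≤ s₈ ∧ s₈ ≤ s₀ :=
  coefficient_zero_location_general r ℓ hrange hmono hdr hnorm
end

section
/- Let a ≥ 1 and let f : [-a, a] → ℝ be C¹. Then ∫_{-a}^{a} f(x)² dx ≤ C a² (∫_{-a}^{a} f'(x)² dx + ∫_{-1}^{1} f(x)² dx) for a universal constant C. -/
open MeasureTheory intervalIntegral Set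

/-- One-dimensional Poincaré-type inequality with localized lower-order term:
there is a universal constant `C` such that for every `a ≥ 1` and every `C¹`
function `f` on `[-a, a]`,
`∫_{-a}^a f² ≤ C a² (∫_{-a}^a f'² + ∫_{-1}^1 f²)`. -/
theorem poincare_localized :
    ∃ C > (0 : ℝ), ∀ a : ℝ, 1 ≤ a → ∀ f : ℝ → ℝ,
      ContDiffOn ℝ 1 f (Set.Icc (-a) a) →
      (∫ x in (-a)..a, (f x) ^ 2) ≤
        C * a ^ 2 * ((∫ x in (-a)..a, (deriv f x) ^ 2)
          + ∫ x in (-1 : ℝ)..1, (f x) ^ 2) := by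
  refine ⟨16, by norm_num, fun a ha f hf => ?_⟩
  have ha0 : (0:ℝ) < a := lt_of_lt_of_le one_pos ha
  have hna : -a ≤ a := by linarith
  have hnalt : -a < a := by linarith
  have h11 : Set.Icc (-1:ℝ) 1 ⊆ Set.Icc (-a) a := Set.Icc_subset_Icc (by linarith) ha
  set g : ℝ → ℝ := fun t => derivWithin f (Set.Icc (-a) a) t with hgdef
  have hcont : ContinuousOn f (Set.Icc (-a) a) := hf.continuousOn
  have hg : ContinuousOn g (Set.Icc (-a) a) :=
    hf.continuousOn_derivWithin (uniqueDiffOn_Icc hnalt) le_rfl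
  -- differentiability at interior points
  have hder : ∀ t ∈ Set.Ioo (-a) a, HasDerivAt f (g t) t := by
    intro t ht
    have h1 : Set.Icc (-a) a ∈ nhds t := Icc_mem_nhds ht.1 ht.2
    have h2 : DifferentiableWithinAt ℝ f (Set.Icc (-a) a) t :=
      (hf.differentiableOn one_ne_zero) t (Set.Ioo_subset_Icc_self ht)
    exact h2.hasDerivWithinAt.hasDerivAt h1
  -- notation
  set S : ℝ := ∫ x in (-a)..a, (f x) ^ 2 with hSdef
  set I : ℝ := ∫ x in (-a)..a, (g x) ^ 2 with hIdef
  set J : ℝ := ∫ x in (-1:ℝ)..1, (f x) ^ 2 with hJdef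
  -- integrability
  have hfi : IntervalIntegrable (fun t => f t ^ 2) volume (-a) a :=
    ((hcont.pow 2).mono (by rw [Set.uIcc_of_le hna])).intervalIntegrable
  have hgi : IntervalIntegrable (fun t => g t ^ 2) volume (-a) a :=
    ((hg.pow 2).mono (by rw [Set.uIcc_of_le hna])).intervalIntegrable
  have hRHScont : ContinuousOn (fun t => 1/(4*a) * f t ^ 2 + 4*a * g t ^ 2)
      (Set.Icc (-a) a) :=
    ((hcont.pow 2).const_smul (1/(4*a))).add ((hg.pow 2).const_smul (4*a))
  have hRHSi : IntervalIntegrable (fun t => 1/(4*a) * f t ^ 2 + 4*a * g t ^ 2)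
      volume (-a) a :=
    (hRHScont.mono (by rw [Set.uIcc_of_le hna])).intervalIntegrable
  set B : ℝ := ∫ t in (-a)..a, (1/(4*a) * f t ^ 2 + 4*a * g t ^ 2) with hBdef
  -- pointwise AM-GM bound
  have ha0' : a ≠ 0 := ne_of_gt ha0
  have hpt : ∀ t : ℝ, |2 * f t * g t| ≤ 1/(4*a) * f t ^ 2 + 4*a * g t ^ 2 := by
    intro t
    have habs : 8*a*|f t * g t| ≤ f t ^ 2 + 16*a^2*g t^2 := by
      rcases abs_cases (f t * g t) with ⟨h, _⟩ | ⟨h, _⟩ <;> rw [h] <;>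
        nlinarith [sq_nonneg (f t - 4*a*g t), sq_nonneg (f t + 4*a*g t)]
    have hmul := mul_le_mul_of_nonneg_left habs
      (le_of_lt (by positivity : (0:ℝ) < 1/(4*a)))
    calc |2 * f t * g t| = 2 * |f t * g t| := by
          rw [mul_assoc, abs_mul, abs_two]
      _ = 1/(4*a) * (8*a*|f t * g t|) := by field_simp; ring
      _ ≤ 1/(4*a) * (f t ^ 2 + 16*a^2*g t^2) := hmul
      _ = 1/(4*a) * f t ^ 2 + 4*a * g t ^ 2 := by field_simp; ring
  -- FTC for f^2
  have ftc : ∀ u ∈ Set.Icc (-a) a, ∀ v ∈ Set.Icc (-a) a, u ≤ v →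
      f v ^ 2 - f u ^ 2 = ∫ t in u..v, 2 * f t * g t := by
    intro u hu v hv huv
    have hsub : Set.Icc u v ⊆ Set.Icc (-a) a := Set.Icc_subset_Icc hu.1 hv.2
    have hd : ∀ t ∈ Set.Ioo u v, HasDerivAt (fun s => f s ^ 2) (2 * f t * g t) t := by
      intro t ht
      have ht' : t ∈ Set.Ioo (-a) a := ⟨lt_of_le_of_lt hu.1 ht.1, lt_of_lt_of_le ht.2 hv.2⟩
      have h := (hder t ht').fun_pow 2
      norm_num at h
      convert h using 1
      try ring
    have hi : IntervalIntegrable (fun t => 2 * f t * g t) volume u v :=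
      (((continuousOn_const.mul (hcont.mono hsub)).mul (hg.mono hsub)).mono
        (by rw [Set.uIcc_of_le huv])).intervalIntegrable
    exact (integral_eq_sub_of_hasDerivAt_of_le huv ((hcont.mono hsub).pow 2) hd hi).symm
  -- key inequality
  have key : ∀ x ∈ Set.Icc (-a) a, ∀ y ∈ Set.Icc (-a) a, f x ^ 2 ≤ f y ^ 2 + B := by
    intro x hx y hy
    have hnonneg : (fun _ => (0:ℝ)) ≤ᵐ[volume.restrict (Set.Ioc (-a) a)]
        (fun t => 1/(4*a) * f t ^ 2 + 4*a * g t ^ 2) :=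
      Filter.Eventually.of_forall fun t => (abs_nonneg (2*f t*g t)).trans (hpt t)
    rcases le_total y x with hyx | hxy
    · have h1 := ftc y hy x hx hyx
      have h2 : (∫ t in y..x, 2 * f t * g t)
          ≤ ∫ t in y..x, (1/(4*a) * f t ^ 2 + 4*a * g t ^ 2) := by
        refine integral_mono_on hyx ?_ ?_ (fun t _ => (le_abs_self _).trans (hpt t))
        · have hsub : Set.Icc y x ⊆ Set.Icc (-a) a := Set.Icc_subset_Icc hy.1 hx.2
          exact (((continuousOn_const.mul (hcont.mono hsub)).mul (hg.mono hsub)).mono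
            (by rw [Set.uIcc_of_le hyx])).intervalIntegrable
        · have hsub : Set.Icc y x ⊆ Set.Icc (-a) a := Set.Icc_subset_Icc hy.1 hx.2
          exact ((hRHScont.mono hsub).mono
            (by rw [Set.uIcc_of_le hyx])).intervalIntegrable
      have h3 : (∫ t in y..x, (1/(4*a) * f t ^ 2 + 4*a * g t ^ 2)) ≤ B :=
        integral_mono_interval hy.1 hyx hx.2 hnonneg hRHSi
      linarith
    · have h1 := ftc x hx y hy hxy
      have h2 : (∫ t in x..y, -(2 * f t * g t))
          ≤ ∫ t in x..y, (1/(4*a) * f t ^ 2 + 4*a * g t ^ 2) := by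
        refine integral_mono_on hxy ?_ ?_ (fun t _ => (neg_le_abs _).trans (hpt t))
        · have hsub : Set.Icc x y ⊆ Set.Icc (-a) a := Set.Icc_subset_Icc hx.1 hy.2
          exact ((((continuousOn_const.mul (hcont.mono hsub)).mul (hg.mono hsub)).mono
            (by rw [Set.uIcc_of_le hxy])).intervalIntegrable).neg
        · have hsub : Set.Icc x y ⊆ Set.Icc (-a) a := Set.Icc_subset_Icc hx.1 hy.2
          exact ((hRHScont.mono hsub).mono
            (by rw [Set.uIcc_of_le hxy])).intervalIntegrable
      have h3 : (∫ t in x..y, (1/(4*a) * f t ^ 2 + 4*a * g t ^ 2)) ≤ B :=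
        integral_mono_interval hx.1 hxy hy.2 hnonneg hRHSi
      rw [intervalIntegral.integral_neg] at h2
      linarith
  -- step 2: pointwise bound by averaging over y ∈ [-1,1]
  have step2 : ∀ x ∈ Set.Icc (-a) a, f x ^ 2 ≤ J / 2 + B := by
    intro x hx
    have h1 : (∫ y in (-1:ℝ)..1, f x ^ 2) ≤ ∫ y in (-1:ℝ)..1, (f y ^ 2 + B) := by
      refine integral_mono_on (by norm_num) intervalIntegrable_const ?_
        (fun y hy => key x hx y (h11 hy))
      exact ((((hcont.mono h11).pow 2).add continuousOn_const).mono
        (by rw [Set.uIcc_of_le (by norm_num : (-1:ℝ) ≤ 1)])).intervalIntegrable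
    have hJint : IntervalIntegrable (fun y => f y ^ 2) volume (-1) 1 := by
      exact (((hcont.mono h11).pow 2).mono
        (by rw [Set.uIcc_of_le (by norm_num : (-1:ℝ) ≤ 1)])).intervalIntegrable
    rw [intervalIntegral.integral_const, intervalIntegral.integral_add hJint
      intervalIntegrable_const, intervalIntegral.integral_const] at h1
    simp only [smul_eq_mul] at h1
    have : (1 - (-1:ℝ)) = 2 := by norm_num
    rw [this] at h1
    linarith [h1]
  -- step 3: integrate over x
  have step3 : S ≤ 2 * a * (J / 2 + B) := by
    have h1 : S ≤ ∫ x in (-a)..a, (J / 2 + B) :=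
      integral_mono_on hna hfi intervalIntegrable_const step2
    rw [intervalIntegral.integral_const, smul_eq_mul] at h1
    calc S ≤ (a - -a) * (J / 2 + B) := h1
      _ = 2 * a * (J / 2 + B) := by ring
  -- compute B
  have hB : B = 1/(4*a) * S + 4*a * I := by
    rw [hBdef, intervalIntegral.integral_add (hfi.const_mul _) (hgi.const_mul _),
      intervalIntegral.integral_const_mul, intervalIntegral.integral_const_mul]
  -- deriv f and g agree a.e.
  have hIeq : I = ∫ x in (-a)..a, (deriv f x) ^ 2 := by
    refine (intervalIntegral.integral_congr_ae ?_).symm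
    have h0 : (volume : Measure ℝ) {a} = 0 := Real.volume_singleton
    rw [Filter.eventually_iff, mem_ae_iff]
    refine measure_mono_null (fun x hx => ?_) h0
    simp only [Set.mem_compl_iff, Set.mem_setOf_eq, Classical.not_imp] at hx
    obtain ⟨hx1, hx2⟩ := hx
    rw [Set.uIoc_of_le hna] at hx1
    by_contra hxa
    have hxIoo : x ∈ Set.Ioo (-a) a := ⟨hx1.1, lt_of_le_of_ne hx1.2 hxa⟩
    exact hx2 (by rw [(hder x hxIoo).deriv])
  -- nonnegativity
  have hJ0 : 0 ≤ J :=
    intervalIntegral.integral_nonneg (by norm_num) (fun u _ => sq_nonneg _)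
  have hI0 : 0 ≤ I :=
    intervalIntegral.integral_nonneg hna (fun u _ => sq_nonneg _)
  -- final arithmetic
  have hfinal : S ≤ 2*a*J + 16*a^2*I := by
    have h1 : 2 * a * (J / 2 + (1/(4*a) * S + 4*a*I)) = a*J + S/2 + 8*a^2*I := by
      field_simp; ring
    rw [hB, h1] at step3
    linarith
  rw [← hIeq]
  calc S ≤ 2*a*J + 16*a^2*I := hfinal
    _ ≤ 16*a^2*J + 16*a^2*I := by
      nlinarith [mul_nonneg (by nlinarith : (0:ℝ) ≤ 16*a^2 - 2*a) hJ0]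
    _ = 16 * a^2 * (I + J) := by ring
end
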